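/- arXiv:2012.05773 — 4 statements merged into one kernel-verified Lean document; each statement's English description precedes it below -/
import Mathlib

section
/- Let ι be a type with decidable equality, V : ι → Type a family of value types, S a set of indices, and f : (Π i, V i) → ℝ a function such that f a = f b whenever a i = b i for all i ∈ S. Fix x ∈ S and an assignment a : Π i, V i. Suppose f a < f (Function.update a x v) for every v : V x with v ≠ a x. Then for every assignment a' : Π i, V i with a' x ≠ a x and a' z = a z for all z ∈ S with z ≠ x, we have f a < f a'. -/
theorem Function.update_apply_eq_of_forall_mem_ne {ι : Type*} [DecidableEq ι] {V : ι → Type*}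
    {S : Set ι} {a a' : ∀ i, V i} {x : ι} (h : ∀ z ∈ S, z ≠ x → a' z = a z) :
    ∀ i ∈ S, Function.update a x (a' x) i = a' i := by
  intro i hi
  rcases eq_or_ne i x with rfl | hix
  · exact Function.update_self i (a' i) a
  · rw [Function.update_of_ne hix, h i hi hix]

theorem monotonic_attack_dialectical_monotonicity_general {ι : Type*} [DecidableEq ι]
    {V : ι → Type*} (S : Set ι) (f : (∀ i, V i) → ℝ)
    (hf : ∀ a b : ∀ i, V i, (∀ i ∈ S, a i = b i) → f a = f b)
    (x : ι) (a : ∀ i, V i)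
    (hatt : ∀ v : V x, v ≠ a x → f a < f (Function.update a x v)) :
    ∀ a' : ∀ i, V i, a' x ≠ a x → (∀ z ∈ S, z ≠ x → a' z = a z) → f a < f a' := by
  intro a' hne hagree
  calc f a < f (Function.update a x (a' x)) := hatt (a' x) hne
    _ = f a' := hf _ _ (Function.update_apply_eq_of_forall_mem_ne hagree)

/-- Attack clause of Proposition 4: monotonic attacks satisfy dialectical
monotonicity. -/
theorem monotonic_attack_dialectical_monotonicity {ι : Type*} [DecidableEq ι]
    {V : ι → Type*} (S : Set ι) (f : (∀ i, V i) → ℝ)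
    (hf : ∀ a b : ∀ i, V i, (∀ i ∈ S, a i = b i) → f a = f b)
    (x : ι) (hx : x ∈ S) (a : ∀ i, V i)
    (hatt : ∀ v : V x, v ≠ a x → f a < f (Function.update a x v)) :
    ∀ a' : ∀ i, V i, a' x ≠ a x → (∀ z ∈ S, z ≠ x → a' z = a z) → f a < f a' :=
  monotonic_attack_dialectical_monotonicity_general S f hf x a hatt
end

section
/- Let ι be a type with decidable equality, V : ι → Type a family of value types, S a set of indices, and f : (Π i, V i) → ℝ a function such that f a = f b whenever a i = b i for all i ∈ S. Fix x ∈ S and an assignment a : Π i, V i. Suppose f a > f (Function.update a x v) for every v : V x with v ≠ a x. Then for every assignment a' : Π i, V i with a' x ≠ a x and a' z = a z for all z ∈ S with z ≠ x, we have f a > f a'. -/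
theorem Function.apply_eq_update_apply_self_of_forall_ne {ι : Type*} [DecidableEq ι] {V : ι → Type*}
    {S : Set ι} {a a' : ∀ i, V i} {x : ι} (h : ∀ z ∈ S, z ≠ x → a' z = a z) :
    ∀ i ∈ S, a' i = Function.update a x (a' x) i := by
  intro i hi
  rcases eq_or_ne i x with rfl | hix
  · rw [Function.update_self]
  · rw [Function.update_of_ne hix, h i hi hix]

theorem monotonic_support_dialectical_monotonicity_general {ι : Type*} [DecidableEq ι]
    {V : ι → Type*} (S : Set ι) (f : (∀ i, V i) → ℝ)
    (hf : ∀ a b : ∀ i, V i, (∀ i ∈ S, a i = b i) → f a = f b)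
    (x : ι) (a : ∀ i, V i)
    (hsup : ∀ v : V x, v ≠ a x → f a > f (Function.update a x v)) :
    ∀ a' : ∀ i, V i, a' x ≠ a x → (∀ z ∈ S, z ≠ x → a' z = a z) → f a > f a' := by
  intro a' hne hagree
  calc f a' = f (Function.update a x (a' x)) :=
        hf _ _ (Function.apply_eq_update_apply_self_of_forall_ne hagree)
    _ < f a := hsup _ hne

/-- Support clause of Proposition 4: monotonic supports satisfy dialectical
monotonicity. -/
theorem monotonic_support_dialectical_monotonicity {ι : Type*} [DecidableEq ι]
    {V : ι → Type*} (S : Set ι) (f : (∀ i, V i) → ℝ)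
    (hf : ∀ a b : ∀ i, V i, (∀ i ∈ S, a i = b i) → f a = f b)
    (x : ι) (hx : x ∈ S) (a : ∀ i, V i)
    (hsup : ∀ v : V x, v ≠ a x → f a > f (Function.update a x v)) :
    ∀ a' : ∀ i, V i, a' x ≠ a x → (∀ z ∈ S, z ≠ x → a' z = a z) → f a > f a' :=
  monotonic_support_dialectical_monotonicity_general S f hf x a hsup
end

section
/- Let V be a finite type, v₀ ∈ V, and for each v ∈ V let p_v : Bool → ℝ satisfy p_v b ≥ 0 for all b : Bool and p_v true + p_v false = 1. Let c : Bool satisfy p_{v₀} c > p_{v₀} (!c). If for every v ≠ v₀ we have p_v (!c) > p_v c, then for every v ≠ v₀ we have p_v c < p_{v₀} c. -/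
namespace Bool

variable {p : Bool → ℝ}

lemma apply_add_apply_not_eq_one (hp : p true + p false = 1) (c : Bool) :
    p c + p (!c) = 1 := by
  cases c
  · rwa [add_comm]
  · exact hp

lemma apply_not_lt_apply_iff_half_lt (hp : p true + p false = 1) (c : Bool) :
    p (!c) < p c ↔ 1 / 2 < p c := by
  have := apply_add_apply_not_eq_one hp c
  constructor <;> intro h <;> linarith

lemma apply_lt_apply_not_iff_lt_half (hp : p true + p false = 1) (c : Bool) :
    p c < p (!c) ↔ p c < 1 / 2 := by
  have := apply_add_apply_not_eq_one hp c
  constructor <;> intro h <;> linarith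

end Bool

theorem critical_influence_is_monotonic_support_general {V : Type*}
    (v₀ : V) (p : V → Bool → ℝ)
    (hp1 : ∀ v, p v true + p v false = 1)
    (c : Bool) (hc : p v₀ c > p v₀ (!c))
    (hcrit : ∀ v ≠ v₀, p v (!c) > p v c) :
    ∀ v ≠ v₀, p v c < p v₀ c := by
  intro v hv
  calc p v c < 1 / 2 := (Bool.apply_lt_apply_not_iff_lt_half (hp1 v) c).mp (hcrit v hv)
    _ < p v₀ c := (Bool.apply_not_lt_apply_iff_half_lt (hp1 v₀) c).mp hc

/-- First half of Proposition 5: for a binary explanandum, every critical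
influence of a CF-IDX is a monotonic support of the MD-IDX. -/
theorem critical_influence_is_monotonic_support {V : Type*} [Fintype V]
    (v₀ : V) (p : V → Bool → ℝ)
    (hp : ∀ v b, 0 ≤ p v b) (hp1 : ∀ v, p v true + p v false = 1)
    (c : Bool) (hc : p v₀ c > p v₀ (!c))
    (hcrit : ∀ v ≠ v₀, p v (!c) > p v c) :
    ∀ v ≠ v₀, p v c < p v₀ c :=
  critical_influence_is_monotonic_support_general v₀ p hp1 c hc hcrit
end

section
/- Let V be a finite type, v₀ ∈ V, and for each v ∈ V let p_v : Bool → ℝ satisfy p_v b ≥ 0 for all b : Bool and p_v true + p_v false = 1. Let c : Bool satisfy p_{v₀} c > p_{v₀} (!c), and suppose for every v ≠ v₀ we have p_v (!c) > p_v c. Let w : V → ℝ satisfy w v ≥ 0 for all v and ∑_{v ≠ v₀} w v > 0. Then p_{v₀} c > (∑_{v ≠ v₀} w v · p_v c) / (∑_{v ≠ v₀} w v). -/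
/-! On `Bool` a strict argmax carries more than half of the mass, so every critical posterior
gives `c` strictly less than `p v₀` does; a weighted average of values below `p v₀ c`
stays below it. -/

theorem Finset.sum_mul_div_sum_lt {ι : Type*} {s : Finset ι} {w f : ι → ℝ} {a : ℝ}
    (hw : ∀ i ∈ s, 0 ≤ w i) (hs : 0 < ∑ i ∈ s, w i) (hf : ∀ i ∈ s, f i < a) :
    (∑ i ∈ s, w i * f i) / ∑ i ∈ s, w i < a := by
  simpa [Finset.centerMass, div_eq_inv_mul] using (convex_Iio a).centerMass_mem hw hs hf

theorem Bool.apply_lt_apply_of_argmax_of_argmin {q r : Bool → ℝ}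
    (hq : q true + q false = 1) (hr : r true + r false = 1) {c : Bool}
    (hqc : q (!c) < q c) (hrc : r c < r (!c)) : r c < q c := by
  cases c <;> simp only [Bool.not_true, Bool.not_false] at hqc hrc <;> linarith

theorem critical_influence_is_stochastic_support_general {V : Type*} [Fintype V] [DecidableEq V]
    (v₀ : V) (p : V → Bool → ℝ)
    (hp1 : ∀ v, p v true + p v false = 1)
    (c : Bool) (hc : p v₀ c > p v₀ (!c))
    (hcrit : ∀ v ≠ v₀, p v (!c) > p v c)
    (w : V → ℝ) (hw : ∀ v, 0 ≤ w v)
    (hs : 0 < ∑ v ∈ Finset.univ.filter (fun v => v ≠ v₀), w v) :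
    p v₀ c > (∑ v ∈ Finset.univ.filter (fun v => v ≠ v₀), w v * p v c) /
      (∑ v ∈ Finset.univ.filter (fun v => v ≠ v₀), w v) :=
  Finset.sum_mul_div_sum_lt (fun v _ => hw v) hs fun v hv =>
    Bool.apply_lt_apply_of_argmax_of_argmin (hp1 v₀) (hp1 v) hc
      (hcrit v (Finset.mem_filter.mp hv).2)

/-- Second half of Proposition 5: for a binary explanandum, every critical
influence of a CF-IDX is a stochastic support of the SD-IDX. -/
theorem critical_influence_is_stochastic_support {V : Type*} [Fintype V] [DecidableEq V]
    (v₀ : V) (p : V → Bool → ℝ)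
    (hp : ∀ v b, 0 ≤ p v b) (hp1 : ∀ v, p v true + p v false = 1)
    (c : Bool) (hc : p v₀ c > p v₀ (!c))
    (hcrit : ∀ v ≠ v₀, p v (!c) > p v c)
    (w : V → ℝ) (hw : ∀ v, 0 ≤ w v)
    (hs : 0 < ∑ v ∈ Finset.univ.filter (fun v => v ≠ v₀), w v) :
    p v₀ c > (∑ v ∈ Finset.univ.filter (fun v => v ≠ v₀), w v * p v c) /
      (∑ v ∈ Finset.univ.filter (fun v => v ≠ v₀), w v) :=
  critical_influence_is_stochastic_support_general v₀ p hp1 c hc hcrit w hw hs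
end
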